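/- arXiv:2501.03871 — 2 statements merged into one kernel-verified Lean document; each statement's English description precedes it below -/
import Mathlib

section
/- Let ℓ ≥ 1 and k ≥ 0 be integers. Suppose W_1 and W_2 are walks in the triangle chain ∇_{2ℓ}, both from u_0 to u_{2ℓ}, that respect unit capacities (every edge of ∇_{2ℓ} is traversed at most once in total by W_1 and W_2), and suppose each of W_1 and W_2 is a concatenation of at most k + 1 geodesics. Then k ≥ ℓ. -/
/-- The triangle chain `∇ m`: top vertices `u_0, …, u_m` (encoded `Sum.inl i` for
`i : Fin (m+1)`), bottom vertices `c_1, …, c_m` (encoded `Sum.inr j` for `j : Fin m`,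
where `Sum.inr j` is the bottom vertex of triangle `j+1`, adjacent to `u_j` and `u_{j+1}`). -/
def triChain (m : ℕ) : SimpleGraph (Fin (m + 1) ⊕ Fin m) where
  Adj x y :=
    match x, y with
    | Sum.inl i, Sum.inl j => (i : ℕ) + 1 = j ∨ (j : ℕ) + 1 = i
    | Sum.inl i, Sum.inr j => (i : ℕ) = j ∨ (i : ℕ) = (j : ℕ) + 1
    | Sum.inr j, Sum.inl i => (i : ℕ) = j ∨ (i : ℕ) = (j : ℕ) + 1
    | Sum.inr _, Sum.inr _ => False
  symm := by
    constructor
    rintro (i | i) (j | j) h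
    · exact Or.symm h
    · exact h
    · exact h
    · exact h
  loopless := by
    constructor
    rintro (i | i) h
    · have h' : (i : ℕ) + 1 = i ∨ (i : ℕ) + 1 = i := h
      omega
    · exact h

/-- The number of occurrences of `a` in the list `l` (counted with multiplicity). -/
noncomputable def cnt {α : Type*} (a : α) (l : List α) : ℕ :=
  letI := Classical.decEq α
  l.count a

/-- `ConcatGeo G j w` means the walk `w` is a concatenation of (exactly) `j` consecutive
geodesics, i.e. subwalks whose length equals the graph distance between their endpoints. -/
inductive ConcatGeo {V : Type*} (G : SimpleGraph V) : ℕ → ∀ {x y : V}, G.Walk x y → Prop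
  | nil {x : V} : ConcatGeo G 0 (SimpleGraph.Walk.nil : G.Walk x x)
  | cons {j : ℕ} {x y z : V} (p : G.Walk x y) (q : G.Walk y z)
      (hp : p.length = G.dist x y) (hq : ConcatGeo G j q) :
      ConcatGeo G (j + 1) (p.append q)

/-!
Put `u_a` at horizontal position `2a` and `c_{j+1}` at `2j + 1`. An edge moves the position by
at most `2`, and by at most `1` if it touches a bottom vertex. Since any two vertices are joined,
through the top row, by a walk attaining this bound, a geodesic meets bottom vertices only at its
endpoints; so a concatenation of at most `k + 1` geodesics from `u_0` to `u_{2ℓ}` visits at most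
`k` bottom vertices. On the other hand, a walk from `u_0` to `u_{2ℓ}` avoiding `c_{t+1}` has
to pass position `2t + 1` along the top edge of triangle `t + 1`, which at most one of `W₁`,
`W₂` may use. Hence each of the `2ℓ` bottom vertices is visited by `W₁` or `W₂`, and `2ℓ ≤ 2k`.
-/

open SimpleGraph

lemma cnt_pos_of_mem {α : Type*} {a : α} {l : List α} (h : a ∈ l) : 0 < cnt a l := by
  classical
  exact List.count_pos_iff.mpr h

lemma List.card_le_countP_isRight {α β : Type*} [Fintype β] (l : List (α ⊕ β))
    (h : ∀ b, Sum.inr b ∈ l) : Fintype.card β ≤ l.countP Sum.isRight := by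
  classical
  calc Fintype.card β
      ≤ (l.filter Sum.isRight).toFinset.card :=
        Finset.card_le_card_of_injOn Sum.inr (fun b _ => by simp [h b])
          Sum.inr_injective.injOn
    _ ≤ (l.filter Sum.isRight).length := List.toFinset_card_le _
    _ = l.countP Sum.isRight := (List.countP_eq_length_filter ..).symm

namespace triChain

variable {m : ℕ}

/-- Twice the horizontal coordinate. -/
def pos : Fin (m + 1) ⊕ Fin m → ℤ
  | Sum.inl a => 2 * (a : ℕ)
  | Sum.inr j => 2 * (j : ℕ) + 1

def depth : Fin (m + 1) ⊕ Fin m → ℕ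
  | Sum.inl _ => 0
  | Sum.inr _ => 1

lemma depth_le_one (x : Fin (m + 1) ⊕ Fin m) : depth x ≤ 1 := by
  cases x <;> simp [depth]

lemma depth_add_depth_add_abs_sub_le {x y : Fin (m + 1) ⊕ Fin m} (h : (triChain m).Adj x y) :
    (depth x + depth y : ℤ) + |pos x - pos y| ≤ 2 := by
  rcases x with a | a <;> rcases y with b | b <;>
    simp only [triChain, depth, pos] at h ⊢ <;>
    rcases h with h | h <;> rcases abs_cases (_ : ℤ) with ⟨habs, -⟩ | ⟨habs, -⟩ <;>
    rw [habs] <;> omega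

def bottomVisits {x y : Fin (m + 1) ⊕ Fin m} (p : (triChain m).Walk x y) : ℕ :=
  p.support.countP Sum.isRight

lemma bottomVisits_nil (x : Fin (m + 1) ⊕ Fin m) :
    bottomVisits (Walk.nil : (triChain m).Walk x x) = depth x := by
  cases x <;> simp [bottomVisits, depth]

lemma bottomVisits_cons {x y z : Fin (m + 1) ⊕ Fin m} (h : (triChain m).Adj x y)
    (p : (triChain m).Walk y z) : bottomVisits (p.cons h) = depth x + bottomVisits p := by
  simp only [bottomVisits, Walk.support_cons, List.countP_cons]
  cases x <;> simp [depth, add_comm]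

lemma bottomVisits_append {x y z : Fin (m + 1) ⊕ Fin m} (p : (triChain m).Walk x y)
    (q : (triChain m).Walk y z) :
    bottomVisits (p.append q) + depth y = bottomVisits p + bottomVisits q := by
  have hq : bottomVisits q = depth y + q.support.tail.countP Sum.isRight := by
    rw [bottomVisits, ← q.cons_tail_support, List.countP_cons]
    cases y <;> simp [depth, add_comm]
  rw [hq, bottomVisits, bottomVisits, Walk.support_append, List.countP_append]
  ring

/-- Each edge pays for its bottom endpoints and its horizontal displacement. -/
lemma two_mul_bottomVisits_add_abs_sub_le {x y : Fin (m + 1) ⊕ Fin m}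
    (p : (triChain m).Walk x y) :
    2 * (bottomVisits p : ℤ) + |pos x - pos y| ≤ 2 * p.length + depth x + depth y := by
  induction p with
  | nil => simp [bottomVisits_nil, two_mul]
  | @cons x w y h q ih =>
    have hstep := depth_add_depth_add_abs_sub_le h
    have htri := abs_sub_le (pos x) (pos w) (pos y)
    rw [bottomVisits_cons, Walk.length_cons]
    push_cast
    linarith

lemma exists_walk_inl_length_eq {a b : Fin (m + 1)} (hab : a ≤ b) :
    ∃ p : (triChain m).Walk (Sum.inl a) (Sum.inl b), p.length = b - a := by
  induction b using Fin.induction with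
  | zero =>
    obtain rfl := Fin.le_zero_iff.mp hab
    exact ⟨Walk.nil, by simp⟩
  | succ c ih =>
    rcases eq_or_ne a c.succ with rfl | hne
    · exact ⟨Walk.nil, by simp⟩
    · have hadj : (triChain m).Adj (Sum.inl c.castSucc) (Sum.inl c.succ) := Or.inl (by simp)
      have hac : a ≤ c.castSucc := Fin.le_castSucc_iff.mpr (lt_of_le_of_ne hab hne)
      obtain ⟨p, hp⟩ := ih hac
      refine ⟨p.concat hadj, ?_⟩
      have := Fin.le_iff_val_le_val.mp hac
      simp only [Walk.length_concat, hp, Fin.val_castSucc, Fin.val_succ] at this ⊢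
      omega

def rightTop : Fin (m + 1) ⊕ Fin m → Fin (m + 1)
  | Sum.inl a => a
  | Sum.inr j => j.succ

def leftTop : Fin (m + 1) ⊕ Fin m → Fin (m + 1)
  | Sum.inl a => a
  | Sum.inr j => j.castSucc

lemma two_mul_rightTop (x : Fin (m + 1) ⊕ Fin m) : 2 * (rightTop x : ℤ) = pos x + depth x := by
  cases x
  · simp [rightTop, pos, depth]
  · simp [rightTop, pos, depth]; ring

lemma two_mul_leftTop (x : Fin (m + 1) ⊕ Fin m) : 2 * (leftTop x : ℤ) = pos x - depth x := by
  cases x <;> simp [leftTop, pos, depth]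

lemma exists_walk_rightTop (x : Fin (m + 1) ⊕ Fin m) :
    ∃ p : (triChain m).Walk x (Sum.inl (rightTop x)), p.length = depth x := by
  rcases x with a | j
  · exact ⟨Walk.nil, rfl⟩
  · have hadj : (triChain m).Adj (Sum.inr j) (Sum.inl j.succ) := Or.inr (Fin.val_succ j)
    exact ⟨hadj.toWalk, rfl⟩

lemma exists_walk_leftTop (x : Fin (m + 1) ⊕ Fin m) :
    ∃ p : (triChain m).Walk (Sum.inl (leftTop x)) x, p.length = depth x := by
  rcases x with a | j
  · exact ⟨Walk.nil, rfl⟩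
  · have hadj : (triChain m).Adj (Sum.inl j.castSucc) (Sum.inr j) := Or.inl rfl
    exact ⟨hadj.toWalk, rfl⟩

lemma exists_walk_two_mul_length_le (x y : Fin (m + 1) ⊕ Fin m) :
    ∃ p : (triChain m).Walk x y,
      2 * (p.length : ℤ) ≤ |pos x - pos y| + depth x + depth y := by
  wlog hxy : pos x ≤ pos y generalizing x y
  · obtain ⟨p, hp⟩ := this y x (by linarith)
    exact ⟨p.reverse, by rw [Walk.length_reverse, abs_sub_comm]; linarith⟩
  rcases eq_or_ne x y with rfl | hne
  · exact ⟨Walk.nil, by simp⟩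
  have hle : rightTop x ≤ leftTop y := by
    rcases x with a | a <;> rcases y with b | b <;>
      simp only [pos, rightTop, leftTop, ne_eq, Sum.inl.injEq, Sum.inr.injEq,
        Fin.le_iff_val_le_val, Fin.ext_iff, Fin.val_castSucc, Fin.val_succ] at hxy hne ⊢ <;>
      omega
  obtain ⟨p, hp⟩ := exists_walk_rightTop x
  obtain ⟨q, hq⟩ := exists_walk_inl_length_eq hle
  obtain ⟨r, hr⟩ := exists_walk_leftTop y
  refine ⟨p.append (q.append r), ?_⟩
  have hx := two_mul_rightTop x
  have hy := two_mul_leftTop y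
  rw [abs_of_nonpos (by linarith), Walk.length_append, Walk.length_append, hp, hq, hr]
  push_cast [Fin.le_iff_val_le_val.mp hle]
  linarith

lemma bottomVisits_le_of_length_eq_dist {x y : Fin (m + 1) ⊕ Fin m} {p : (triChain m).Walk x y}
    (hp : p.length = (triChain m).dist x y) : bottomVisits p ≤ depth x + depth y := by
  obtain ⟨q, hq⟩ := exists_walk_two_mul_length_le x y
  have hpq : (p.length : ℤ) ≤ q.length := by exact_mod_cast hp ▸ dist_le q
  have := two_mul_bottomVisits_add_abs_sub_le p
  have : (bottomVisits p : ℤ) ≤ depth x + depth y := by linarith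
  exact_mod_cast this

/-- The truncated `j - 1` makes the bound exact for `j = 0`, where `w` is `nil`. -/
lemma bottomVisits_le_of_concatGeo {j : ℕ} {x y : Fin (m + 1) ⊕ Fin m}
    {w : (triChain m).Walk x y} (h : ConcatGeo (triChain m) j w) :
    bottomVisits w ≤ depth x + j - 1 + depth y := by
  induction h with
  | nil => rw [bottomVisits_nil]; omega
  | @cons j x y z p q hp _ ih =>
    have := bottomVisits_append p q
    have := bottomVisits_le_of_length_eq_dist hp
    have := depth_le_one x
    have := depth_le_one y
    omega

lemma inr_mem_support_or_mem_edges {x y : Fin (m + 1) ⊕ Fin m} (p : (triChain m).Walk x y)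
    (t : Fin m) (hx : pos x ≤ 2 * t + 1) (hy : 2 * t + 1 < pos y) :
    Sum.inr t ∈ p.support ∨ s(Sum.inl t.castSucc, Sum.inl t.succ) ∈ p.edges := by
  obtain ⟨⟨⟨a, b⟩, hab⟩, hd, ha, hb⟩ :=
    p.exists_boundary_dart {v | pos v ≤ 2 * t + 1} hx (not_le.mpr hy)
  have hstep := depth_add_depth_add_abs_sub_le hab
  have hle := le_abs_self (pos a - pos b)
  have hge := neg_abs_le (pos a - pos b)
  simp only [Set.mem_ofPred_eq, not_le] at ha hb
  rcases a with i | i <;> rcases b with i' | i' <;> simp only [pos, depth] at ha hb hstep hle hge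
  · right
    obtain rfl : i = t.castSucc := Fin.ext (by simp only [Fin.val_castSucc]; omega)
    obtain rfl : i' = t.succ := Fin.ext (by simp only [Fin.val_succ]; omega)
    exact List.mem_map_of_mem hd
  · omega
  · left
    obtain rfl : i = t := Fin.ext (by omega)
    exact p.dart_fst_mem_support_of_mem_darts hd
  · exact hab.elim

end triChain

theorem stmt3_general (ℓ k : ℕ)
    (W₁ W₂ : (triChain (2 * ℓ)).Walk (Sum.inl 0) (Sum.inl (Fin.last (2 * ℓ))))
    (hcap : ∀ e : Sym2 (Fin (2 * ℓ + 1) ⊕ Fin (2 * ℓ)),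
      cnt e W₁.edges + cnt e W₂.edges ≤ 1)
    (h₁ : ∃ j ≤ k + 1, ConcatGeo (triChain (2 * ℓ)) j W₁)
    (h₂ : ∃ j ≤ k + 1, ConcatGeo (triChain (2 * ℓ)) j W₂) :
    ℓ ≤ k := by
  have hvisits : ∀ W : (triChain (2 * ℓ)).Walk (Sum.inl 0) (Sum.inl (Fin.last (2 * ℓ))),
      (∃ j ≤ k + 1, ConcatGeo (triChain (2 * ℓ)) j W) → triChain.bottomVisits W ≤ k := by
    rintro W ⟨j, hj, hW⟩
    have := triChain.bottomVisits_le_of_concatGeo hW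
    simp only [triChain.depth] at this
    omega
  have hcover : ∀ t : Fin (2 * ℓ), Sum.inr t ∈ W₁.support ++ W₂.support := by
    intro t
    have hcut := fun W : (triChain (2 * ℓ)).Walk (Sum.inl 0) (Sum.inl (Fin.last (2 * ℓ))) ↦
      triChain.inr_mem_support_or_mem_edges W t (by simp [triChain.pos]; omega)
        (by simp [triChain.pos]; omega)
    rcases hcut W₁ with h | htop₁
    · exact List.mem_append_left _ h
    rcases hcut W₂ with h | htop₂
    · exact List.mem_append_right _ h
    have := hcap s(Sum.inl t.castSucc, Sum.inl t.succ)
    have := cnt_pos_of_mem htop₁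
    have := cnt_pos_of_mem htop₂
    omega
  have hcard : 2 * ℓ ≤ triChain.bottomVisits W₁ + triChain.bottomVisits W₂ := by
    simpa [triChain.bottomVisits, List.countP_append] using
      List.card_le_countP_isRight _ hcover
  have := hvisits W₁ h₁
  have := hvisits W₂ h₂
  omega

/-- if two walks in `∇ (2ℓ)` from `u_0` to `u_{2ℓ}` respect unit capacities and
each is a concatenation of at most `k + 1` geodesics, then `k ≥ ℓ`. -/
theorem stmt3 (ℓ k : ℕ) (hℓ : 1 ≤ ℓ)
    (W₁ W₂ : (triChain (2 * ℓ)).Walk (Sum.inl 0) (Sum.inl (Fin.last (2 * ℓ))))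
    (hcap : ∀ e : Sym2 (Fin (2 * ℓ + 1) ⊕ Fin (2 * ℓ)),
      cnt e W₁.edges + cnt e W₂.edges ≤ 1)
    (h₁ : ∃ j ≤ k + 1, ConcatGeo (triChain (2 * ℓ)) j W₁)
    (h₂ : ∃ j ≤ k + 1, ConcatGeo (triChain (2 * ℓ)) j W₂) :
    ℓ ≤ k :=
  stmt3_general ℓ k W₁ W₂ hcap h₁ h₂
end

section
/- Let G = (V, E) be a finite simple undirected graph with |V| ≥ 2. Let G' be the complete bipartite graph with parts V and W = {x_r, x_g, x_b, x_d} (every vertex of V adjacent to every vertex of W), all edges of length 1. Then G admits a proper 3-edge-coloring if and only if there exist walks in G', one walk from u to v for every edge uv ∈ E and one walk from x_d to u for every u ∈ V, such that the collection of all these walks respects unit capacities and each walk is a concatenation of at most 2 unique-shortest-path segments. -/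
/-- `ConcatUSP G j w`: the walk `w` is a concatenation of (exactly) `j` consecutive
subwalks, each of which is the unique shortest path in `G` between its endpoints. -/
inductive ConcatUSP {V : Type*} (G : SimpleGraph V) : ℕ → ∀ {x y : V}, G.Walk x y → Prop
  | nil {x : V} : ConcatUSP G 0 (SimpleGraph.Walk.nil : G.Walk x x)
  | cons {j : ℕ} {x y z : V} (p : G.Walk x y) (q : G.Walk y z)
      (hp : p.length = G.dist x y)
      (hu : ∀ p' : G.Walk x y, p'.length = G.dist x y → p' = p)
      (hq : ConcatUSP G j q) : ConcatUSP G (j + 1) (p.append q)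

/-- The complete bipartite graph with parts `V` and `W = {x_r, x_g, x_b, x_d}`
(encoded as `Fin 4`, with `x_d = 3`): every vertex of `V` is adjacent
to every vertex of `W` and there are no further edges. -/
def bipG (V : Type*) : SimpleGraph (V ⊕ Fin 4) where
  Adj x y :=
    match x, y with
    | Sum.inl _, Sum.inr _ => True
    | Sum.inr _, Sum.inl _ => True
    | _, _ => False
  symm := by
    constructor
    rintro (u | u) (v | v) h
    · exact h
    · trivial
    · trivial
    · exact h
  loopless := by
    constructor
    rintro (u | u) h
    · exact h
    · exact h

/-!
In `K_{V,4}` with `|V| ≥ 2` any two vertices on the same side have two distinct common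
neighbours, so a unique shortest path is a single edge and a concatenation of at most two of
them has length at most two. As the graph is bipartite, this forces the walk from `x_d` to `u`
to be the edge `x_d u` and the walk of an edge `uv` to be `u x_k v` for some hub `x_k`. Unit
capacities then say exactly that no edge uses the hub `x_d`, whose edges are taken by the walks
from `x_d`, and that two edges sharing an endpoint use different hubs: the hubs
`x_r, x_g, x_b` are a proper 3-edge-coloring, and conversely.
-/

open SimpleGraph Sum

lemma cnt_eq_count {α : Type*} [DecidableEq α] (a : α) (l : List α) : cnt a l = l.count a := by
  unfold cnt
  congr
  exact Subsingleton.elim _ _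

def RespectsUnitCapacities {ι α : Type*} [Fintype ι] (L : ι → List α) : Prop :=
  ∀ a, ∑ i, cnt a (L i) ≤ 1

theorem respectsUnitCapacities_iff {ι α : Type*} [Fintype ι] (L : ι → List α) :
    RespectsUnitCapacities L ↔
      (∀ i, (L i).Nodup) ∧ ∀ a i j, a ∈ L i → a ∈ L j → i = j := by
  classical
  simp only [RespectsUnitCapacities, cnt_eq_count]
  constructor
  · intro h
    refine ⟨fun i => List.nodup_iff_count_le_one.mpr fun a =>
      (Finset.single_le_sum (fun j _ => Nat.zero_le _) (Finset.mem_univ i)).trans (h a), ?_⟩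
    intro a i j hi hj
    by_contra hij
    have hsum := (Finset.sum_pair hij).symm.trans_le
      (Finset.sum_le_univ_sum_of_nonneg (f := fun k => (L k).count a) (s := {i, j})
        fun _ => Nat.zero_le _)
    have hi' := List.count_pos_iff.mpr hi
    have hj' := List.count_pos_iff.mpr hj
    have ha := h a
    omega
  · rintro ⟨hnodup, hdisj⟩ a
    by_cases ha : ∃ i, a ∈ L i
    · obtain ⟨i, hi⟩ := ha
      rw [Finset.sum_eq_single i (fun j _ hji => List.count_eq_zero.mpr
        fun hj => hji (hdisj a j i hj hi)) (by simp)]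
      exact List.nodup_iff_count_le_one.mp (hnodup i) a
    · simp [List.count_eq_zero.mpr (not_exists.mp ha _)]

lemma SimpleGraph.ne_of_coe_edgeSet_eq {W : Type*} {G : SimpleGraph W} (e : G.edgeSet) {u v : W}
    (h : (e : Sym2 W) = s(u, v)) : u ≠ v := by
  simpa [h] using G.not_isDiag_of_mem_edgeSet e.2

lemma SimpleGraph.Walk.eq_cons_nil_of_length_eq_one {W : Type*} {G : SimpleGraph W} {x y : W}
    (h : G.Adj x y) (p : G.Walk x y) (hp : p.length = 1) : p = .cons h .nil := by
  match p, hp with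
  | .cons _ .nil, _ => rfl

lemma ConcatUSP.cons_of_adj {W : Type*} {G : SimpleGraph W} {j : ℕ} {x y z : W}
    (h : G.Adj x y) {q : G.Walk y z} (hq : ConcatUSP G j q) : ConcatUSP G (j + 1) (.cons h q) :=
  have hd : G.dist x y = 1 := dist_eq_one_iff_adj.mpr h
  .cons (.cons h .nil) q (by simp [hd])
    (fun p' hp' => p'.eq_cons_nil_of_length_eq_one h (hp'.trans hd)) hq

lemma SimpleGraph.Walk.length_le_one_of_two_common_neighbors {W : Type*} {G : SimpleGraph W}
    {x y m₁ m₂ : W} (hm : m₁ ≠ m₂) (hx₁ : G.Adj x m₁) (hy₁ : G.Adj m₁ y)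
    (hx₂ : G.Adj x m₂) (hy₂ : G.Adj m₂ y) (p : G.Walk x y) (hp : p.length = G.dist x y)
    (hu : ∀ p' : G.Walk x y, p'.length = G.dist x y → p' = p) : p.length ≤ 1 := by
  let w₁ : G.Walk x y := .cons hx₁ (.cons hy₁ .nil)
  let w₂ : G.Walk x y := .cons hx₂ (.cons hy₂ .nil)
  have hle : G.dist x y ≤ 2 := dist_le w₁
  by_contra! hlen
  have hd : G.dist x y = 2 := by omega
  have hw : w₁ = w₂ := (hu w₁ hd.symm).trans (hu w₂ hd.symm).symm
  exact hm (by simpa [w₁, w₂] using congrArg Walk.support hw)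

namespace bipG

variable {V : Type*}

lemma adj_or_exists_two_common_neighbors [Fintype V] (hV : 2 ≤ Fintype.card V)
    (x y : V ⊕ Fin 4) : (bipG V).Adj x y ∨ ∃ m₁ m₂, m₁ ≠ m₂ ∧
      (bipG V).Adj x m₁ ∧ (bipG V).Adj m₁ y ∧ (bipG V).Adj x m₂ ∧ (bipG V).Adj m₂ y := by
  rcases x with u | i <;> rcases y with v | j
  · exact .inr ⟨inr 0, inr 1, by simp, trivial, trivial, trivial, trivial⟩
  · exact .inl trivial
  · exact .inl trivial
  · obtain ⟨a, b, hab⟩ := Fintype.exists_pair_of_one_lt_card hV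
    exact .inr ⟨inl a, inl b, by simpa using hab, trivial, trivial, trivial, trivial⟩

lemma length_le_of_concatUSP [Fintype V] (hV : 2 ≤ Fintype.card V) {j : ℕ}
    {x y : V ⊕ Fin 4} {w : (bipG V).Walk x y} (h : ConcatUSP (bipG V) j w) : w.length ≤ j := by
  induction h with
  | nil => simp
  | @cons j x y z p q hp hu hq ih =>
    have hp1 : p.length ≤ 1 := by
      rcases adj_or_exists_two_common_neighbors hV x y with hxy | ⟨m₁, m₂, hm, h₁, h₂, h₃, h₄⟩
      · exact (hp.trans (dist_eq_one_iff_adj.mpr hxy)).le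
      · exact p.length_le_one_of_two_common_neighbors hm h₁ h₂ h₃ h₄ hp hu
    rw [Walk.length_append]
    omega

lemma adj_inl_inr (u : V) (k : Fin 4) : (bipG V).Adj (inl u) (inr k) := trivial

lemma adj_inr_inl (k : Fin 4) (u : V) : (bipG V).Adj (inr k) (inl u) := trivial

def viaHub (u v : V) (k : Fin 4) : (bipG V).Walk (inl u) (inl v) :=
  .cons (adj_inl_inr u k) (.cons (adj_inr_inl k v) .nil)

def fromHub (k : Fin 4) (u : V) : (bipG V).Walk (inr k) (inl u) :=
  .cons (adj_inr_inl k u) .nil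

lemma concatUSP_viaHub (u v : V) (k : Fin 4) : ConcatUSP (bipG V) 2 (viaHub u v k) :=
  .cons_of_adj _ (.cons_of_adj _ .nil)

lemma concatUSP_fromHub (k : Fin 4) (u : V) : ConcatUSP (bipG V) 1 (fromHub k u) :=
  .cons_of_adj _ .nil

lemma mem_edges_viaHub {u v : V} {k : Fin 4} {a : Sym2 (V ⊕ Fin 4)} :
    a ∈ (viaHub u v k).edges ↔ ∃ w ∈ s(u, v), a = s(inl w, inr k) := by
  simp [viaHub, Sym2.eq_swap (a := inr k)]

lemma edges_fromHub (k : Fin 4) (u : V) : (fromHub k u).edges = [s(inl u, inr k)] := by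
  simp [fromHub, Sym2.eq_swap]

lemma eq_viaHub_of_length_le_two {u v : V} (huv : u ≠ v) (w : (bipG V).Walk (inl u) (inl v))
    (hw : w.length ≤ 2) : ∃ k, w = viaHub u v k := by
  match w, hw with
  | .nil, _ => exact absurd rfl huv
  | .cons (v := inl _) h _, _ => exact (h : False).elim
  | .cons (v := inr _) _ (.cons (v := inr _) h _), _ => exact (h : False).elim
  | .cons (v := inr k) _ (.cons (v := inl _) _ .nil), _ => exact ⟨k, rfl⟩
  | .cons (v := inr k) _ (.cons (v := inl _) _ (.cons _ _)), hw => simp at hw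

lemma eq_fromHub_of_length_le_two {k : Fin 4} {u : V} (w : (bipG V).Walk (inr k) (inl u))
    (hw : w.length ≤ 2) : w = fromHub k u := by
  match w, hw with
  | .cons _ .nil, _ => rfl
  | .cons (v := inl _) _ (.cons (v := inl _) h _), _ => exact (h : False).elim
  | .cons (v := inl _) _ (.cons (v := inr _) _ (.cons _ _)), hw => simp at hw
  | .cons (v := inr _) h _, _ => exact (h : False).elim

end bipG

section HubRouting

open bipG

variable {V : Type*} {G : SimpleGraph V}

def hubRouting (o : G.edgeSet → V × V) (k : G.edgeSet → Fin 4) :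
    G.edgeSet ⊕ V → List (Sym2 (V ⊕ Fin 4)) :=
  Sum.elim (fun e => (viaHub (o e).1 (o e).2 (k e)).edges) fun u => (fromHub 3 u).edges

variable [Fintype V] [Fintype G.edgeSet] {o : G.edgeSet → V × V}

lemma sum_cnt_hubRouting (k : G.edgeSet → Fin 4) (a : Sym2 (V ⊕ Fin 4)) :
    ∑ i, cnt a (hubRouting o k i) =
      (∑ e, cnt a (viaHub (o e).1 (o e).2 (k e)).edges) + ∑ u, cnt a (fromHub 3 u).edges :=
  Fintype.sum_sum_type _

lemma respectsUnitCapacities_hubRouting_iff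
    (ho : ∀ e : G.edgeSet, (e : Sym2 V) = s((o e).1, (o e).2)) (k : G.edgeSet → Fin 4) :
    RespectsUnitCapacities (hubRouting o k) ↔ (∀ e, k e ≠ 3) ∧
      ∀ e₁ e₂ : G.edgeSet, e₁ ≠ e₂ → (∃ v, v ∈ (e₁ : Sym2 V) ∧ v ∈ (e₂ : Sym2 V)) →
        k e₁ ≠ k e₂ := by
  have mem_inl {a e} :
      a ∈ hubRouting o k (inl e) ↔ ∃ w ∈ (e : Sym2 V), a = s(inl w, inr (k e)) := by
    rw [ho e]; exact mem_edges_viaHub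
  have mem_inr {a u} : a ∈ hubRouting o k (inr u) ↔ a = s(inl u, inr 3) := by
    simp [hubRouting, edges_fromHub]
  have hnodup : ∀ i, (hubRouting o k i).Nodup := by
    rintro (e | u)
    · simp [hubRouting, viaHub, Sym2.eq_swap (a := inr (k e)), ne_of_coe_edgeSet_eq e (ho e)]
    · simp [hubRouting, edges_fromHub]
  rw [respectsUnitCapacities_iff]
  simp only [hnodup, implies_true, true_and]
  constructor
  · intro h
    refine ⟨fun e he => ?_, fun e₁ e₂ hne ⟨w, hw₁, hw₂⟩ hk => hne ?_⟩
    · have hx := mem_inl.mpr ⟨(o e).1, by rw [ho e]; exact Sym2.mem_mk_left _ _, by rw [he]⟩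
      exact inl_ne_inr (h _ (inl e) (inr (o e).1) hx (mem_inr.mpr rfl))
    · exact inl_injective (h _ (inl e₁) (inl e₂) (mem_inl.mpr ⟨w, hw₁, rfl⟩)
        (mem_inl.mpr ⟨w, hw₂, by rw [hk]⟩))
  · rintro ⟨h3, hk⟩ a (e₁ | u₁) (e₂ | u₂) h₁ h₂ <;> simp only [mem_inl, mem_inr] at h₁ h₂
    · obtain ⟨w, hw₁, rfl⟩ := h₁
      obtain ⟨w', hw₂, hw, hke⟩ : ∃ w' ∈ (e₂ : Sym2 V), w = w' ∧ k e₁ = k e₂ := by simpa using h₂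
      subst hw
      by_contra hne
      exact hk e₁ e₂ (fun h => hne (congrArg inl h)) ⟨w, hw₁, hw₂⟩ hke
    · obtain ⟨w, -, rfl⟩ := h₁
      exact absurd (by simpa using h₂ : w = u₂ ∧ k e₁ = 3).2 (h3 e₁)
    · obtain ⟨w, -, h⟩ := h₂
      exact absurd (by simpa [h₁] using h : u₁ = w ∧ 3 = k e₂).2.symm (h3 e₂)
    · subst h₁
      exact congrArg inr (by simpa using h₂)

end HubRouting

/-- a graph `G` on at least two vertices admits a proper 3-edge-coloring iff
in the complete bipartite graph `G'` with parts `V` and `{x_r, x_g, x_b, x_d}` there are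
walks — one from `u` to `v` for every edge `uv ∈ E` (the edges being oriented by a fixed
orientation `o`) and one from `x_d` to `u` for every `u ∈ V` — that together respect unit
capacities, each walk being a concatenation of at most 2 unique-shortest-path segments. -/
theorem stmt8 {V : Type*} [Fintype V] (hV : 2 ≤ Fintype.card V)
    (G : SimpleGraph V) [Fintype G.edgeSet]
    (o : G.edgeSet → V × V)
    (ho : ∀ e : G.edgeSet, (e : Sym2 V) = s((o e).1, (o e).2)) :
    (∃ c : G.edgeSet → Fin 3, ∀ e₁ e₂ : G.edgeSet, e₁ ≠ e₂ →
      (∃ v, v ∈ (e₁ : Sym2 V) ∧ v ∈ (e₂ : Sym2 V)) → c e₁ ≠ c e₂) ↔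
    (∃ (F : ∀ e : G.edgeSet, (bipG V).Walk (Sum.inl (o e).1) (Sum.inl (o e).2))
       (Dw : ∀ u : V, (bipG V).Walk (Sum.inr 3) (Sum.inl u)),
      (∀ a : Sym2 (V ⊕ Fin 4),
        (∑ e : G.edgeSet, cnt a (F e).edges) + (∑ u : V, cnt a (Dw u).edges) ≤ 1) ∧
      (∀ e : G.edgeSet, ∃ j ≤ 2, ConcatUSP (bipG V) j (F e)) ∧
      (∀ u : V, ∃ j ≤ 2, ConcatUSP (bipG V) j (Dw u))) := by
  constructor
  · rintro ⟨c, hc⟩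
    have hrouting := (respectsUnitCapacities_hubRouting_iff ho fun e => (c e).castSucc).mpr
      ⟨fun e => Fin.castSucc_ne_last (c e),
        fun e₁ e₂ hne hv => (Fin.castSucc_injective 3).ne (hc e₁ e₂ hne hv)⟩
    exact ⟨_, _, fun a => sum_cnt_hubRouting (o := o) _ a ▸ hrouting a,
      fun e => ⟨2, le_rfl, bipG.concatUSP_viaHub ..⟩,
      fun u => ⟨1, one_le_two, bipG.concatUSP_fromHub ..⟩⟩
  · rintro ⟨F, Dw, hcap, hF, hD⟩
    choose k hk using fun e => (hF e).elim fun j ⟨hj, h⟩ =>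
      bipG.eq_viaHub_of_length_le_two (ne_of_coe_edgeSet_eq e (ho e)) _ ((bipG.length_le_of_concatUSP hV h).trans hj)
    obtain rfl : F = fun e => bipG.viaHub (o e).1 (o e).2 (k e) := funext hk
    obtain rfl : Dw = bipG.fromHub 3 := funext fun u => (hD u).elim fun j ⟨hj, h⟩ =>
      bipG.eq_fromHub_of_length_le_two _ ((bipG.length_le_of_concatUSP hV h).trans hj)
    obtain ⟨h3, hk⟩ := (respectsUnitCapacities_hubRouting_iff ho k).mp
      fun a => sum_cnt_hubRouting k a ▸ hcap a
    exact ⟨fun e => (k e).castPred (h3 e),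
      fun e₁ e₂ hne hv h => hk e₁ e₂ hne hv (Fin.castPred_inj.mp h)⟩
end
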